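/- Let π : FreeMagma X → FreeMagma Unit be the magma morphism sending every variable of X to the single generator x. If two terms T, T' in FreeMagma X satisfy π(T) = π(T'), then T ≡LD T' holds if and only if T = T'. -/

import Mathlib

/-!
Let `A * B ≡ A' * B'` with `π A = π A'`. Both sides have a common LD-expansion (Dehornoy's
operator `∂T` absorbs every expansion of `T`), and following the left spines through the two
expansions shows that `A ≡ A'`, or that one of `A`, `A'` strictly left-divides the other up to
`≡`. Strict left division survives `π`, so the second case would give a cycle `a ⊏ a` in the
free LD-system on one generator. That is impossible by Larue's argument: braids act on the free
group `⟨a₀, a₁, …⟩`, a term evaluates to such an automorphism, `a ⊏ b` multiplies it by a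
`σ₁`-positive braid, and a `σ₁`-positive braid maps `a₀` to a reduced word beginning with `a₀`
and ending with `a₀⁻¹`, hence is not the identity. So `A ≡ A'`, then `A = A'` by induction,
and `B = B'` by the same argument run inside the context `A * ⋯`.
-/

/-- LD-equivalence: the smallest congruence on `FreeMagma X` containing all pairs
`(T₁ ◃ (T₂ ◃ T₃), (T₁ ◃ T₂) ◃ (T₁ ◃ T₃))`. -/
inductive LDEquiv {X : Type*} : FreeMagma X → FreeMagma X → Prop
  | ld (a b c : FreeMagma X) : LDEquiv (a * (b * c)) ((a * b) * (a * c))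
  | refl (a : FreeMagma X) : LDEquiv a a
  | symm {a b : FreeMagma X} : LDEquiv a b → LDEquiv b a
  | trans {a b c : FreeMagma X} : LDEquiv a b → LDEquiv b c → LDEquiv a c
  | mul_left {a b : FreeMagma X} (c : FreeMagma X) : LDEquiv a b → LDEquiv (c * a) (c * b)
  | mul_right {a b : FreeMagma X} (c : FreeMagma X) : LDEquiv a b → LDEquiv (a * c) (b * c)

open Relation

namespace FreeMagma

variable {X : Type*}

/-! ### Confluence of LD-expansion -/

inductive LDStep : FreeMagma X → FreeMagma X → Prop
  | root (a b c : FreeMagma X) : LDStep (a * (b * c)) ((a * b) * (a * c))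
  | mul_left {a a' : FreeMagma X} (b : FreeMagma X) : LDStep a a' → LDStep (a * b) (a' * b)
  | mul_right {b b' : FreeMagma X} (a : FreeMagma X) : LDStep b b' → LDStep (a * b) (a * b')

def LDExpands : FreeMagma X → FreeMagma X → Prop := ReflTransGen LDStep

theorem LDExpands.refl {a : FreeMagma X} : LDExpands a a := ReflTransGen.refl

theorem LDExpands.single {a b : FreeMagma X} (h : LDStep a b) : LDExpands a b :=
  ReflTransGen.single h

theorem LDExpands.trans {a b c : FreeMagma X} (hab : LDExpands a b) (hbc : LDExpands b c) :
    LDExpands a c :=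
  ReflTransGen.trans hab hbc

theorem LDExpands.head {a b c : FreeMagma X} (hab : LDStep a b) (hbc : LDExpands b c) :
    LDExpands a c :=
  ReflTransGen.head hab hbc

theorem LDExpands.mul_left {a a' : FreeMagma X} (b : FreeMagma X) (h : LDExpands a a') :
    LDExpands (a * b) (a' * b) :=
  ReflTransGen.lift (· * b) (fun _ _ => LDStep.mul_left b) _ _ h

theorem LDExpands.mul_right {b b' : FreeMagma X} (a : FreeMagma X) (h : LDExpands b b') :
    LDExpands (a * b) (a * b') :=
  ReflTransGen.lift (a * ·) (fun _ _ => LDStep.mul_right a) _ _ h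

theorem LDExpands.mul {a a' b b' : FreeMagma X} (ha : LDExpands a a') (hb : LDExpands b b') :
    LDExpands (a * b) (a' * b') :=
  (ha.mul_left b).trans (hb.mul_right a')

theorem LDStep.ldEquiv {T T' : FreeMagma X} (h : LDStep T T') : LDEquiv T T' := by
  induction h with
  | root a b c => exact .ld a b c
  | mul_left b _ ih => exact .mul_right b ih
  | mul_right a _ ih => exact .mul_left a ih

def distribute (a : FreeMagma X) : FreeMagma X → FreeMagma X
  | of x => a * of x
  | mul b c => distribute a b * distribute a c

theorem ldExpands_distribute (a b : FreeMagma X) : LDExpands (a * b) (distribute a b) := by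
  induction b using recOnMul with
  | ih1 x => exact .refl
  | ih2 b c ihb ihc => exact .head (.root a b c) (ihb.mul ihc)

theorem ldExpands_distribute_distribute (a b c : FreeMagma X) :
    LDExpands (distribute a (distribute b c)) (distribute (distribute a b) (distribute a c)) := by
  induction c using recOnMul with
  | ih1 x => exact .head (.root _ a (of x)) ((ldExpands_distribute _ a).mul_left _)
  | ih2 c₁ c₂ ih₁ ih₂ => exact ih₁.mul ih₂

theorem LDExpands.distribute {a a' b b' : FreeMagma X} (ha : LDExpands a a')
    (hb : LDExpands b b') : LDExpands (distribute a b) (distribute a' b') := by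
  have hleft : ∀ b, LDExpands (FreeMagma.distribute a b) (FreeMagma.distribute a' b) :=
    fun b => by
      induction b using recOnMul with
      | ih1 x => exact ha.mul_left _
      | ih2 b c ihb ihc => exact ihb.mul ihc
  refine (hleft b).trans (ReflTransGen.lift (FreeMagma.distribute a') (fun _ _ h => ?_) _ _ hb)
  induction h with
  | root x y z => exact .root _ _ _
  | mul_left c _ ih => exact .mul_left _ ih
  | mul_right c _ ih => exact .mul_right _ ih

/-- Dehornoy's operator `∂`. -/
def fullDistrib : FreeMagma X → FreeMagma X
  | of x => of x
  | mul a b => distribute (fullDistrib a) (fullDistrib b)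

theorem ldExpands_mul_distribute {a b A B : FreeMagma X} (ha : LDExpands a A)
    (hb : LDExpands b B) : LDExpands (a * b) (distribute A B) :=
  (ha.mul hb).trans (ldExpands_distribute A B)

theorem ldExpands_fullDistrib (T : FreeMagma X) : LDExpands T (fullDistrib T) := by
  induction T using recOnMul with
  | ih1 x => exact .refl
  | ih2 a b iha ihb => exact ldExpands_mul_distribute iha ihb

theorem LDExpands.fullDistrib {T T' : FreeMagma X} (h : LDExpands T T') :
    LDExpands (fullDistrib T) (fullDistrib T') := by
  refine ReflTransGen.lift' FreeMagma.fullDistrib (fun _ _ hstep => ?_) _ _ h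
  induction hstep with
  | root a b c => exact ldExpands_distribute_distribute _ _ _
  | mul_left b _ ih => exact LDExpands.distribute ih .refl
  | mul_right a _ ih => exact LDExpands.distribute .refl ih

theorem ldExpands_fullDistrib_of_ldStep {T T' : FreeMagma X} (h : LDStep T T') :
    LDExpands T' (fullDistrib T) := by
  induction h with
  | root a b c =>
    have hab := ldExpands_mul_distribute (ldExpands_fullDistrib a) (ldExpands_fullDistrib b)
    have hac := ldExpands_mul_distribute (ldExpands_fullDistrib a) (ldExpands_fullDistrib c)
    exact (hab.mul hac).trans
      (LDExpands.distribute (a := fullDistrib a) .refl (ldExpands_distribute _ _))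
  | mul_left b _ ih => exact ldExpands_mul_distribute ih (ldExpands_fullDistrib b)
  | mul_right a _ ih => exact ldExpands_mul_distribute (ldExpands_fullDistrib a) ih

theorem ldExpands_iterate_fullDistrib (k : ℕ) (T : FreeMagma X) :
    LDExpands T (fullDistrib^[k] T) := by
  induction k with
  | zero => exact .refl
  | succ k ih =>
    rw [Function.iterate_succ_apply']
    exact ih.trans (ldExpands_fullDistrib _)

theorem ldExpands_iterate_fullDistrib_of_le (T : FreeMagma X) {m n : ℕ} (h : m ≤ n) :
    LDExpands (fullDistrib^[m] T) (fullDistrib^[n] T) := by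
  obtain ⟨k, rfl⟩ := Nat.exists_eq_add_of_le h
  rw [add_comm, Function.iterate_add_apply]
  exact ldExpands_iterate_fullDistrib k _

theorem LDExpands.exists_iterate_fullDistrib {T U : FreeMagma X}
    (h : LDExpands T U) : ∃ n, LDExpands U (FreeMagma.fullDistrib^[n] T) := by
  induction h with
  | refl => exact ⟨0, .refl⟩
  | tail _ hstep ih =>
    obtain ⟨n, hn⟩ := ih
    refine ⟨n + 1, ?_⟩
    rw [Function.iterate_succ_apply']
    exact (ldExpands_fullDistrib_of_ldStep hstep).trans hn.fullDistrib

theorem _root_.LDEquiv.exists_common_ldExpands {T T' : FreeMagma X} (h : LDEquiv T T') :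
    ∃ U, LDExpands T U ∧ LDExpands T' U := by
  induction h with
  | ld a b c => exact ⟨_, .single (.root a b c), .refl⟩
  | refl a => exact ⟨a, .refl, .refl⟩
  | symm _ ih =>
    obtain ⟨U, h₁, h₂⟩ := ih
    exact ⟨U, h₂, h₁⟩
  | @trans a b c _ _ ihab ihbc =>
    obtain ⟨U₁, ha, hb₁⟩ := ihab
    obtain ⟨U₂, hb₂, hc⟩ := ihbc
    obtain ⟨n₁, k₁⟩ := hb₁.exists_iterate_fullDistrib
    obtain ⟨n₂, k₂⟩ := hb₂.exists_iterate_fullDistrib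
    exact ⟨fullDistrib^[max n₁ n₂] b,
      ha.trans (k₁.trans (ldExpands_iterate_fullDistrib_of_le b (le_max_left _ _))),
      hc.trans (k₂.trans (ldExpands_iterate_fullDistrib_of_le b (le_max_right _ _)))⟩
  | mul_left c _ ih =>
    obtain ⟨U, h₁, h₂⟩ := ih
    exact ⟨c * U, h₁.mul_right c, h₂.mul_right c⟩
  | mul_right c _ ih =>
    obtain ⟨U, h₁, h₂⟩ := ih
    exact ⟨U * c, h₁.mul_left c, h₂.mul_left c⟩

/-! ### Comparison -/

def leftSpine : FreeMagma X → List (FreeMagma X)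
  | of x => [of x]
  | mul a b => (a * b) :: leftSpine a

theorem mem_leftSpine_self (T : FreeMagma X) : T ∈ leftSpine T := by
  cases T <;> simp [leftSpine]

/-- Dehornoy's `a ⊏ b`: `b ≡ a * w₁ * ⋯ * wₙ` for some `n ≥ 1`. -/
def LeftDivLt : FreeMagma X → FreeMagma X → Prop := TransGen fun u v => ∃ w, LDEquiv v (u * w)

theorem LeftDivLt.of_ldEquiv {a b : FreeMagma X} (w : FreeMagma X) (h : LDEquiv b (a * w)) :
    LeftDivLt a b :=
  .single ⟨w, h⟩

theorem LeftDivLt.tail {a b c : FreeMagma X} (hab : LeftDivLt a b) (w : FreeMagma X)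
    (h : LDEquiv c (b * w)) : LeftDivLt a c :=
  TransGen.tail hab ⟨w, h⟩

theorem LeftDivLt.congr_left {a a' b : FreeMagma X} (h : LDEquiv a a') (hlt : LeftDivLt a b) :
    LeftDivLt a' b := by
  induction hlt with
  | single hstep =>
    obtain ⟨w, hw⟩ := hstep
    exact .of_ldEquiv w (hw.trans (.mul_right w h))
  | tail _ hstep ih => exact TransGen.tail ih hstep

theorem LeftDivLt.congr_right {a b b' : FreeMagma X} (h : LDEquiv b b') (hlt : LeftDivLt a b) :
    LeftDivLt a b' := by
  cases hlt with
  | single hstep =>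
    obtain ⟨w, hw⟩ := hstep
    exact .of_ldEquiv w (h.symm.trans hw)
  | tail hac hstep =>
    obtain ⟨w, hw⟩ := hstep
    exact LeftDivLt.tail hac w (h.symm.trans hw)

theorem leftDivLt_mul_of_mem_leftSpine {S A : FreeMagma X} (b : FreeMagma X) (h : S ∈ leftSpine A) :
    LeftDivLt S (A * b) := by
  induction A using recOnMul generalizing b with
  | ih1 x =>
    obtain rfl : S = of x := List.mem_singleton.mp h
    exact .of_ldEquiv b (.refl _)
  | ih2 a c iha _ =>
    obtain rfl | hS := List.mem_cons.mp h
    · exact .of_ldEquiv b (.refl _)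
    · exact (iha c hS).tail b (.refl _)

theorem leftSpine_trichotomy {U S S' : FreeMagma X} (hS : S ∈ leftSpine U)
    (hS' : S' ∈ leftSpine U) : S = S' ∨ LeftDivLt S S' ∨ LeftDivLt S' S := by
  induction U using recOnMul with
  | ih1 x => simp_all [leftSpine]
  | ih2 a b iha _ =>
    rcases List.mem_cons.mp hS, List.mem_cons.mp hS' with ⟨rfl | hS, rfl | hS'⟩
    · exact .inl rfl
    · exact .inr (.inr (leftDivLt_mul_of_mem_leftSpine b hS'))
    · exact .inr (.inl (leftDivLt_mul_of_mem_leftSpine b hS))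
    · exact iha hS hS'

theorem LDStep.exists_mem_leftSpine {V V' : FreeMagma X} (h : LDStep V V') :
    ∀ S ∈ leftSpine V, ∃ S' ∈ leftSpine V', LDEquiv S S' := by
  induction h with
  | root a b c =>
    intro S hS
    obtain rfl | hS := List.mem_cons.mp hS
    · exact ⟨_, List.mem_cons_self, .ld a b c⟩
    · exact ⟨S, List.mem_cons_of_mem _ (List.mem_cons_of_mem _ hS), .refl S⟩
  | mul_left b hstep ih =>
    intro S hS
    obtain rfl | hS := List.mem_cons.mp hS
    · exact ⟨_, List.mem_cons_self, .mul_right b hstep.ldEquiv⟩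
    · obtain ⟨S', hS', hSS'⟩ := ih S hS
      exact ⟨S', List.mem_cons_of_mem _ hS', hSS'⟩
  | mul_right a hstep _ =>
    intro S hS
    obtain rfl | hS := List.mem_cons.mp hS
    · exact ⟨_, List.mem_cons_self, .mul_left a hstep.ldEquiv⟩
    · exact ⟨S, List.mem_cons_of_mem _ hS, .refl S⟩

theorem LDExpands.exists_mem_leftSpine {V V' : FreeMagma X} (h : LDExpands V V') :
    ∀ S ∈ leftSpine V, ∃ S' ∈ leftSpine V', LDEquiv S S' := by
  induction h with
  | refl => exact fun S hS => ⟨S, hS, .refl S⟩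
  | tail _ hstep ih =>
    intro S hS
    obtain ⟨S₁, hS₁, h₁⟩ := ih S hS
    obtain ⟨S₂, hS₂, h₂⟩ := hstep.exists_mem_leftSpine S₁ hS₁
    exact ⟨S₂, hS₂, h₁.trans h₂⟩

theorem _root_.LDEquiv.comparison {P Q P' Q' : FreeMagma X} (h : LDEquiv (P * Q) (P' * Q')) :
    LDEquiv P P' ∨ LeftDivLt P P' ∨ LeftDivLt P' P := by
  obtain ⟨U, hU, hU'⟩ := h.exists_common_ldExpands
  obtain ⟨S, hS, hPS⟩ :=
    hU.exists_mem_leftSpine P (List.mem_cons_of_mem _ (mem_leftSpine_self P))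
  obtain ⟨S', hS', hPS'⟩ :=
    hU'.exists_mem_leftSpine P' (List.mem_cons_of_mem _ (mem_leftSpine_self P'))
  rcases leftSpine_trichotomy hS hS' with rfl | hlt | hlt
  · exact .inl (hPS.trans hPS'.symm)
  · exact .inr (.inl ((hlt.congr_left hPS.symm).congr_right hPS'.symm))
  · exact .inr (.inr ((hlt.congr_left hPS'.symm).congr_right hPS.symm))

end FreeMagma

/-! ### Larue's action of braids on the free group -/

namespace FreeGroup

variable {α β : Type*}

theorem mk_mem_range_map {f : α → β} {w : List (β × Bool)} (h : ∀ p ∈ w, p.1 ∈ Set.range f) :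
    mk w ∈ (map f).range := by
  induction w with
  | nil => exact Subgroup.one_mem _
  | cons p w ih =>
    obtain ⟨y, hy⟩ := h p List.mem_cons_self
    rw [← List.singleton_append, ← mul_mk]
    refine Subgroup.mul_mem _ ⟨mk [(y, p.2)], ?_⟩ (ih fun q hq => h q (List.mem_cons_of_mem _ hq))
    simp [map.mk, hy]

variable [DecidableEq α] [DecidableEq β]

theorem IsReduced.toWord_mk {w : List (α × Bool)} (h : IsReduced w) : (mk w).toWord = w := by
  rw [FreeGroup.toWord_mk, h.reduce_eq]

theorem toWord_map_of_injective {f : α → β} (hf : Function.Injective f) (g : FreeGroup α) :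
    (map f g).toWord = g.toWord.map (Prod.map f id) := by
  conv_lhs => rw [← mk_toWord (x := g), map.mk]
  refine IsReduced.toWord_mk ((List.isChain_map _).mpr ?_)
  exact isReduced_toWord.imp fun p q hpq hf' => hpq (hf hf')

end FreeGroup

namespace Larue

open FreeGroup

/-- The free group on `a₀, a₁, a₂, …`, with `aₖ = of k`. -/
abbrev F := FreeGroup ℕ

def shift : F →* F := FreeGroup.map Nat.succ

@[simp] theorem shift_of (k : ℕ) : shift (of k) = of (k + 1) := map.of

theorem shift_injective : Function.Injective shift := map_injective Nat.succ_injective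

def kind (p : ℕ × Bool) : Option Bool := if p.1 = 0 then some p.2 else none

theorem kind_isSome (p : ℕ × Bool) : (kind p).isSome = (p.1 == 0) := by
  unfold kind; split_ifs with h <;> simp [h]

def wordEnds (w : List (ℕ × Bool)) : Option (Option Bool) × Option (Option Bool) :=
  (w.head?.map kind, w.getLast?.map kind)

theorem wordEnds_append (u v : List (ℕ × Bool)) :
    wordEnds (u ++ v) = ((wordEnds u).1.or (wordEnds v).1, (wordEnds v).2.or (wordEnds u).2) := by
  simp [wordEnds, Option.map_or]

/-- Two words can be juxtaposed without cancellation when exactly one of the two letters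
meeting at the junction is `a₀^{±1}`. -/
def Alternate (e e' : Option (Option Bool) × Option (Option Bool)) : Prop :=
  ∀ k ∈ e.2, ∀ k' ∈ e'.1, k.isSome ≠ k'.isSome

theorem toWord_mul_of_alternate {x y : F} (h : Alternate (wordEnds x.toWord) (wordEnds y.toWord)) :
    (x * y).toWord = x.toWord ++ y.toWord := by
  conv_lhs => rw [← mk_toWord (x := x), ← mk_toWord (x := y), mul_mk]
  refine IsReduced.toWord_mk (List.isChain_append.mpr ⟨isReduced_toWord, isReduced_toWord, ?_⟩)
  intro p hp q hq hpq
  refine absurd ?_ (h _ (Option.mem_map_of_mem kind hp) _ (Option.mem_map_of_mem kind hq))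
  rw [kind_isSome, kind_isSome, hpq]

theorem wordEnds_mul_of_alternate {x y : F}
    (h : Alternate (wordEnds x.toWord) (wordEnds y.toWord)) :
    wordEnds (x * y).toWord = ((wordEnds x.toWord).1.or (wordEnds y.toWord).1,
      (wordEnds y.toWord).2.or (wordEnds x.toWord).2) := by
  rw [toWord_mul_of_alternate h, wordEnds_append]

theorem wordEnds_of_forall_kind_eq_none {w : List (ℕ × Bool)} (hw : w ≠ [])
    (h : ∀ p ∈ w, kind p = none) : wordEnds w = (some none, some none) := by
  simp [wordEnds, List.head?_eq_some_head hw, List.getLast?_eq_some_getLast hw,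
    h _ (List.head_mem hw), h _ (List.getLast_mem hw)]

theorem wordEnds_of_mem_range_shift {h : F} (hh : h ∈ shift.range) (h1 : h ≠ 1) :
    wordEnds h.toWord = (some none, some none) := by
  obtain ⟨y, rfl⟩ := hh
  rw [Ne, ← toWord_eq_nil_iff] at h1
  refine wordEnds_of_forall_kind_eq_none h1 fun p hp => ?_
  rw [shift, toWord_map_of_injective Nat.succ_injective, List.mem_map] at hp
  obtain ⟨q, -, rfl⟩ := hp
  simp [kind]

theorem alternate_wordEnds_takeWhile_dropWhile (c : Bool) (w : List (ℕ × Bool)) :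
    Alternate (wordEnds (w.takeWhile fun q => (q.1 == 0) == c))
      (wordEnds (w.dropWhile fun q => (q.1 == 0) == c)) := by
  rintro _ hk _ hk'
  obtain ⟨q, hq, rfl⟩ := Option.mem_map.mp hk
  obtain ⟨r, hr, rfl⟩ := Option.mem_map.mp hk'
  have hqc := List.mem_takeWhile_imp (List.mem_of_mem_getLast? hq)
  have hrc := List.head?_dropWhile_not (fun q : ℕ × Bool => (q.1 == 0) == c) w
  rw [Option.mem_def.mp hr] at hrc
  simp only [beq_iff_eq, beq_eq_false_iff_ne] at hqc hrc
  rw [kind_isSome, kind_isSome, hqc]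
  exact Ne.symm hrc

section Syllables

variable {ψ : F →* F}

theorem map_mk_of_forall_eq_zero (hψ₀ : ψ (of 0) = of 0) {w : List (ℕ × Bool)}
    (hw : ∀ p ∈ w, p.1 = 0) : ψ (mk w) = mk w := by
  obtain ⟨y, hy⟩ := mk_mem_range_map (f := fun _ : Unit => 0) fun p hp => ⟨(), (hw p hp).symm⟩
  rw [← hy]
  exact DFunLike.congr_fun (ext_hom (ψ.comp (map _)) (map _) fun _ => by simp [hψ₀]) y

theorem wordEnds_map_mk_of_syllable (hψ₀ : ψ (of 0) = of 0)
    (hψ : Set.MapsTo ψ ((shift.range : Set F) \ {1}) ((shift.range : Set F) \ {1}))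
    {w : List (ℕ × Bool)} (hw : IsReduced w) (hne : w ≠ []) {c : Bool}
    (hc : ∀ q ∈ w, (q.1 == 0) = c) : wordEnds (ψ (mk w)).toWord = wordEnds w := by
  cases c with
  | true => rw [map_mk_of_forall_eq_zero hψ₀ fun q hq => by simpa using hc q hq, hw.toWord_mk]
  | false =>
    have hmem : mk w ∈ (shift.range : Set F) \ {1} := by
      refine ⟨mk_mem_range_map fun q hq => Nat.exists_eq_succ_of_ne_zero (by simpa using hc q hq)
        |>.imp fun _ => Eq.symm, ?_⟩
      rwa [Set.mem_singleton_iff, ← toWord_eq_nil_iff, hw.toWord_mk]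
    obtain ⟨hψw, hψw1⟩ := hψ hmem
    rw [wordEnds_of_mem_range_shift hψw hψw1, ← hw.toWord_mk,
      wordEnds_of_mem_range_shift hmem.1 hmem.2]

/-- Cut the reduced word of `g` into its first maximal syllable (a power of `a₀`, or a word
avoiding `a₀`) and the rest: `ψ` maps syllables to syllables of the same type, so nothing
cancels at the junction. -/
theorem wordEnds_toWord_map (hψ₀ : ψ (of 0) = of 0)
    (hψ : Set.MapsTo ψ ((shift.range : Set F) \ {1}) ((shift.range : Set F) \ {1})) (g : F) :
    wordEnds (ψ g).toWord = wordEnds g.toWord := by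
  suffices ∀ n (w : List (ℕ × Bool)), w.length = n → IsReduced w →
      wordEnds (ψ (mk w)).toWord = wordEnds w by
    simpa only [mk_toWord] using this _ g.toWord rfl isReduced_toWord
  intro n
  induction n using Nat.strong_induction_on with
  | _ n ih =>
  rintro (_ | ⟨p, w⟩) rfl hw
  · simp [← one_eq_mk, wordEnds]
  set t := fun q : ℕ × Bool => (q.1 == 0) == (p.1 == 0)
  set u := (p :: w).takeWhile t
  set v := (p :: w).dropWhile t
  have hsplit : u ++ v = p :: w := List.takeWhile_append_dropWhile
  have hu : u ≠ [] := by simp [u, t]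
  have hv : v.length < (p :: w).length := by
    rw [← hsplit, List.length_append]
    exact Nat.lt_add_of_pos_left (List.length_pos_iff.mpr hu)
  have hψu := wordEnds_map_mk_of_syllable hψ₀ hψ (hw.infix (List.takeWhile_prefix t).isInfix) hu
    (c := p.1 == 0) fun q hq => beq_iff_eq.mp (List.mem_takeWhile_imp (p := t) hq)
  have hψv := ih _ hv v rfl (hw.infix (List.dropWhile_suffix t).isInfix)
  have halt := alternate_wordEnds_takeWhile_dropWhile (p.1 == 0) (p :: w)
  rw [← hψu, ← hψv] at halt
  rw [← hsplit, ← mul_mk, _root_.map_mul, wordEnds_mul_of_alternate halt, hψu, hψv, wordEnds_append]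

end Syllables

/-- The reduced word of `g` begins with `a₀` and ends with `a₀⁻¹`. -/
def IsFlanked (g : F) : Prop := wordEnds g.toWord = (some (some true), some (some false))

theorem not_isFlanked_of_zero : ¬ IsFlanked (of 0) := by
  simp [IsFlanked, wordEnds, kind]

theorem isFlanked_conj {x : F} (hx : wordEnds x.toWord = (some none, some none)) :
    IsFlanked (of 0 * x * (of 0)⁻¹) := by
  have h₀ : wordEnds (of 0 : F).toWord = (some (some true), some (some true)) := by
    simp [wordEnds, kind]
  have h₀' : wordEnds (of 0 : F)⁻¹.toWord = (some (some false), some (some false)) := by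
    simp [wordEnds, kind, invRev]
  have h₁ : wordEnds (of 0 * x).toWord = (some (some true), some none) := by
    have halt : Alternate (wordEnds (of 0 : F).toWord) (wordEnds x.toWord) := by
      rw [h₀, hx]; simp [Alternate]
    rw [wordEnds_mul_of_alternate halt, h₀, hx]; rfl
  have halt : Alternate (wordEnds (of 0 * x).toWord) (wordEnds (of 0 : F)⁻¹.toWord) := by
    rw [h₁, h₀']; simp [Alternate]
  rw [IsFlanked, wordEnds_mul_of_alternate halt, h₁, h₀']; rfl

def shiftHom (β : MulAut F) : F →* F :=
  FreeGroup.lift fun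
    | 0 => of 0
    | k + 1 => shift (β (of k))

@[simp] theorem shiftHom_of_zero (β : MulAut F) : shiftHom β (of 0) = of 0 := lift_apply_of

@[simp] theorem shiftHom_of_succ (β : MulAut F) (k : ℕ) :
    shiftHom β (of (k + 1)) = shift (β (of k)) :=
  lift_apply_of

theorem shiftHom_shift (β : MulAut F) (x : F) : shiftHom β (shift x) = shift (β x) := by
  refine DFunLike.congr_fun (ext_hom ((shiftHom β).comp shift) (shift.comp β.toMonoidHom)
    fun k => ?_) x
  simp

theorem shiftHom_mul (β γ : MulAut F) : shiftHom (β * γ) = (shiftHom β).comp (shiftHom γ) :=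
  ext_hom _ _ fun k => by cases k <;> simp [shiftHom_shift]

theorem shiftHom_one : shiftHom 1 = MonoidHom.id F :=
  ext_hom _ _ fun k => by cases k <;> simp

/-- The shift `β ↦ sh(β)` of braid automorphisms: `σᵢ ↦ σᵢ₊₁`. -/
def shiftAut : MulAut F →* MulAut F where
  toFun β := (shiftHom β).toMulEquiv (shiftHom β⁻¹)
    (by rw [← shiftHom_mul, inv_mul_cancel, shiftHom_one])
    (by rw [← shiftHom_mul, mul_inv_cancel, shiftHom_one])
  map_one' := MulEquiv.ext fun x => by simp [shiftHom_one]
  map_mul' β γ := MulEquiv.ext fun x => by simp [shiftHom_mul]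

@[simp] theorem shiftAut_apply (β : MulAut F) (x : F) : shiftAut β x = shiftHom β x := rfl

theorem mapsTo_shiftAut (β : MulAut F) :
    Set.MapsTo (shiftAut β) ((shift.range : Set F) \ {1}) ((shift.range : Set F) \ {1}) := by
  rintro _ ⟨⟨y, rfl⟩, hy⟩
  refine ⟨⟨β y, (shiftHom_shift β y).symm⟩, ?_⟩
  simpa [shiftHom_shift, map_eq_one_iff _ shift_injective] using hy

theorem IsFlanked.shiftAut (β : MulAut F) {g : F} (hg : IsFlanked g) :
    IsFlanked (Larue.shiftAut β g) :=
  (wordEnds_toWord_map (by simp) (mapsTo_shiftAut β) g).trans hg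

/-- Artin's automorphism `σ₁`: `a₀ ↦ a₀ a₁ a₀⁻¹`, `a₁ ↦ a₀`, `aₖ ↦ aₖ` for `k ≥ 2`, written so
that `IsFlanked.sigma` reduces to `IsFlanked.shiftAut`. -/
def sigma : MulAut F :=
  MulAut.conj (of 0) * freeGroupCongr (Equiv.swap 0 1) * shiftAut (MulAut.conj (of 0)⁻¹)

theorem sigma_apply (g : F) : sigma g =
    of 0 * map (Equiv.swap 0 1) (shiftHom (MulAut.conj (of 0)⁻¹) g) * (of 0)⁻¹ :=
  rfl

@[simp] theorem sigma_of_zero : sigma (of 0) = of 0 * of 1 * (of 0)⁻¹ := by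
  simp [sigma_apply]

@[simp] theorem sigma_of_one : sigma (of 1) = of 0 := by
  simp [sigma_apply]

@[simp] theorem sigma_of_add_two (k : ℕ) : sigma (of (k + 2)) = of (k + 2) := by
  simp [sigma_apply, Equiv.swap_apply_of_ne_of_ne, mul_assoc]

theorem wordEnds_toWord_swap {y : F} (hy : IsFlanked y) :
    wordEnds (freeGroupCongr (Equiv.swap 0 1) y).toWord = (some none, some none) := by
  have hswap : ∀ p : ℕ × Bool, (kind p).isSome → kind (Prod.map (Equiv.swap 0 1) id p) = none := by
    rintro ⟨k, b⟩ h
    rw [kind_isSome, beq_iff_eq] at h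
    subst h
    simp [kind]
  obtain ⟨hhead, hlast⟩ := Prod.mk.inj hy
  obtain ⟨p, hp, hpk⟩ := Option.map_eq_some_iff.mp hhead
  obtain ⟨q, hq, hqk⟩ := Option.map_eq_some_iff.mp hlast
  simp [toWord_map_of_injective (Equiv.injective _), wordEnds, hp, hq,
    hswap p (by simp [hpk]), hswap q (by simp [hqk])]

theorem IsFlanked.sigma {g : F} (hg : IsFlanked g) : IsFlanked (sigma g) :=
  isFlanked_conj (wordEnds_toWord_swap (hg.shiftAut _))

theorem isFlanked_sigma_of_zero : IsFlanked (sigma (of 0)) := by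
  rw [sigma_of_zero]
  exact isFlanked_conj (by simp [wordEnds, kind])

theorem mulAut_ext {β γ : MulAut F} (h : ∀ k, β (of k) = γ (of k)) : β = γ :=
  MulEquiv.toMonoidHom_injective (ext_hom _ _ h)

theorem sigma_shift_shift (x : F) : sigma (shift (shift x)) = shift (shift x) :=
  DFunLike.congr_fun (ext_hom (sigma.toMonoidHom.comp (shift.comp shift)) (shift.comp shift)
    fun k => by simp) x

theorem sigma_commute_shiftAut_shiftAut (γ : MulAut F) :
    sigma * shiftAut (shiftAut γ) = shiftAut (shiftAut γ) * sigma :=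
  mulAut_ext fun k => by
    rcases k with _ | _ | k <;> simp [sigma_shift_shift]

theorem sigma_braid : sigma * shiftAut sigma * sigma = shiftAut sigma * sigma * shiftAut sigma :=
  mulAut_ext fun k => by
    rcases k with _ | _ | _ | k <;> simp [mul_assoc]

/-- The automorphisms induced by `σ₁`-positive braids: products of factors `sh(β) σ₁ sh(γ)`. -/
def sigmaPositive : Subsemigroup (MulAut F) :=
  Subsemigroup.closure {θ | ∃ β γ, θ = shiftAut β * sigma * shiftAut γ}

theorem isFlanked_of_mem_sigmaPositive {θ : MulAut F} (hθ : θ ∈ sigmaPositive) :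
    ∀ g, IsFlanked g ∨ g = of 0 → IsFlanked (θ g) := by
  induction hθ using Subsemigroup.closure_induction with
  | mem θ hθ =>
    obtain ⟨β, γ, rfl⟩ := hθ
    rintro g (hg | rfl)
    · exact ((hg.shiftAut γ).sigma).shiftAut β
    · simpa using isFlanked_sigma_of_zero.shiftAut β
  | mul θ θ' _ _ ih ih' => exact fun g hg => ih _ (.inl (ih' g hg))

theorem ne_one_of_mem_sigmaPositive {θ : MulAut F} (hθ : θ ∈ sigmaPositive) : θ ≠ 1 := by
  rintro rfl
  exact not_isFlanked_of_zero (isFlanked_of_mem_sigmaPositive hθ _ (.inr rfl))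

end Larue

namespace FreeMagma

open Larue

variable {X : Type*}

/-- The value of a term in Dehornoy's LD-structure `a ◃ b = a · sh(b) · σ₁ · sh(a)⁻¹` on braids,
acting on `F`, with every variable sent to `1`. -/
def ldAut : FreeMagma X → MulAut F
  | of _ => 1
  | mul a b => ldAut a * shiftAut (ldAut b) * sigma * (shiftAut (ldAut a))⁻¹

@[simp] theorem ldAut_mul (a b : FreeMagma X) :
    ldAut (a * b) = ldAut a * shiftAut (ldAut b) * sigma * (shiftAut (ldAut a))⁻¹ :=
  rfl

theorem ldAut_ld (a b c : FreeMagma X) : ldAut (a * (b * c)) = ldAut ((a * b) * (a * c)) := by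
  simp only [ldAut_mul, map_mul, map_inv]
  set A := ldAut a
  set sA := shiftAut A
  set sB := shiftAut (ldAut b)
  set sσ := shiftAut sigma
  set ssA := shiftAut (shiftAut A)
  set ssB := shiftAut (shiftAut (ldAut b))
  set ssC := shiftAut (shiftAut (ldAut c))
  have hC : sigma * ssC = ssC * sigma := sigma_commute_shiftAut_shiftAut _
  have hA : ssA⁻¹ * (sigma * ssA) = sigma := by
    rw [sigma_commute_shiftAut_shiftAut, inv_mul_cancel_left]
  have hbraid : sigma * sσ * sigma = sσ * sigma * sσ := sigma_braid
  have hB : sigma * ssB⁻¹ = ssB⁻¹ * sigma :=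
    (Commute.inv_right (sigma_commute_shiftAut_shiftAut (ldAut b))).eq
  symm
  calc A * sB * sigma * sA⁻¹ * (sA * ssC * sσ * ssA⁻¹) * sigma * (sA * ssB * sσ * ssA⁻¹)⁻¹
      = A * sB * ((sigma * ssC) * (sσ * (ssA⁻¹ * (sigma * ssA)) * sσ⁻¹ * (ssB⁻¹ * sA⁻¹))) := by
        group
    _ = A * sB * ssC * ((sigma * sσ * sigma) * (sσ⁻¹ * (ssB⁻¹ * sA⁻¹))) := by
        rw [hC, hA]; group
    _ = A * sB * ssC * sσ * ((sigma * ssB⁻¹) * sA⁻¹) := by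
        rw [hbraid]; group
    _ = A * (sB * ssC * sσ * ssB⁻¹) * sigma * sA⁻¹ := by
        rw [hB]; group

theorem _root_.LDEquiv.ldAut_eq {T T' : FreeMagma X} (h : LDEquiv T T') : ldAut T = ldAut T' := by
  induction h with
  | ld a b c => exact ldAut_ld a b c
  | refl a => rfl
  | symm _ ih => exact ih.symm
  | trans _ _ ih ih' => exact ih.trans ih'
  | mul_left c _ ih => simp [ih]
  | mul_right c _ ih => simp [ih]

theorem LeftDivLt.exists_ldAut_eq {a b : FreeMagma X} (h : LeftDivLt a b) :
    ∃ θ ∈ sigmaPositive, ldAut b = ldAut a * θ := by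
  have step : ∀ {u v : FreeMagma X}, (∃ w, LDEquiv v (u * w)) →
      ∃ θ ∈ sigmaPositive, ldAut v = ldAut u * θ := by
    rintro u v ⟨w, hw⟩
    refine ⟨_, Subsemigroup.subset_closure ⟨ldAut w, (ldAut u)⁻¹, rfl⟩, ?_⟩
    rw [hw.ldAut_eq, ldAut_mul, map_inv]
    group
  induction h with
  | single hstep => exact step hstep
  | tail _ hstep ih =>
    obtain ⟨θ, hθ, hab⟩ := ih
    obtain ⟨θ', hθ', hbc⟩ := step hstep
    exact ⟨θ * θ', mul_mem hθ hθ', by rw [hbc, hab, mul_assoc]⟩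

theorem LeftDivLt.irrefl (a : FreeMagma X) : ¬ LeftDivLt a a := fun h => by
  obtain ⟨θ, hθ, h⟩ := h.exists_ldAut_eq
  exact ne_one_of_mem_sigmaPositive hθ (mul_eq_left.mp h.symm)

/-! ### Cancellation for terms of equal shape -/

def shape (T : FreeMagma X) : FreeMagma Unit := map (fun _ => ()) T

@[simp] theorem shape_mul (a b : FreeMagma X) : shape (a * b) = shape a * shape b := rfl

theorem shape_of_ne_shape_mul (x : X) (a b : FreeMagma X) : shape (of x) ≠ shape (a * b) :=
  nofun

theorem _root_.LDEquiv.map {Y : Type*} (f : X → Y) {T T' : FreeMagma X} (h : LDEquiv T T') :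
    LDEquiv (map f T) (map f T') := by
  induction h with
  | ld a b c => exact .ld _ _ _
  | refl a => exact .refl _
  | symm _ ih => exact ih.symm
  | trans _ _ ih ih' => exact ih.trans ih'
  | mul_left c _ ih => exact .mul_left _ ih
  | mul_right c _ ih => exact .mul_right _ ih

theorem LeftDivLt.map {Y : Type*} (f : X → Y) {a b : FreeMagma X} (h : LeftDivLt a b) :
    LeftDivLt (FreeMagma.map f a) (FreeMagma.map f b) :=
  TransGen.lift (FreeMagma.map f) (fun _ _ ⟨w, hw⟩ => ⟨FreeMagma.map f w, hw.map f⟩) _ _ h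

theorem LeftDivLt.shape_ne {a b : FreeMagma X} (h : LeftDivLt a b) : shape a ≠ shape b := by
  intro hab
  have hlt : LeftDivLt (shape a) (shape b) := h.map _
  exact LeftDivLt.irrefl _ (hab ▸ hlt)

theorem _root_.LDEquiv.left_of_shape_eq {P Q P' Q' : FreeMagma X}
    (h : LDEquiv (P * Q) (P' * Q')) (hshape : shape P = shape P') : LDEquiv P P' := by
  rcases h.comparison with h | h | h
  · exact h
  · exact absurd hshape h.shape_ne
  · exact absurd hshape.symm h.shape_ne

def rightmost : FreeMagma X → X
  | of x => x
  | mul _ b => rightmost b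

theorem _root_.LDEquiv.rightmost_eq {T T' : FreeMagma X} (h : LDEquiv T T') :
    rightmost T = rightmost T' := by
  induction h with
  | ld a b c => rfl
  | refl a => rfl
  | symm _ ih => exact ih.symm
  | trans _ _ ih ih' => exact ih.trans ih'
  | mul_left c _ ih => exact ih
  | mul_right c _ ih => rfl

def rightNest (L : List (FreeMagma X)) (W : FreeMagma X) : FreeMagma X := L.foldr (· * ·) W

@[simp] theorem rightNest_cons (d : FreeMagma X) (L : List (FreeMagma X)) (W : FreeMagma X) :
    rightNest (d :: L) W = d * rightNest L W :=
  rfl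

theorem ldEquiv_rightNest_mul (L : List (FreeMagma X)) (D A B : FreeMagma X) :
    LDEquiv (D * rightNest L (A * B)) ((D * rightNest L A) * (D * rightNest L B)) := by
  induction L generalizing D with
  | nil => exact .ld D A B
  | cons d L ih => exact (LDEquiv.mul_left D (ih d)).trans (.ld D _ _)

theorem shape_rightNest (L : List (FreeMagma X)) (W : FreeMagma X) :
    shape (rightNest L W) = rightNest (L.map shape) (shape W) := by
  induction L with
  | nil => rfl
  | cons d L ih => simp [ih]

theorem rightmost_rightNest (L : List (FreeMagma X)) (W : FreeMagma X) :
    rightmost (rightNest L W) = rightmost W := by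
  induction L with
  | nil => rfl
  | cons d L ih => exact ih

/-- The context `D * rightNest L ⋯` is closed under the induction: distributing it over `W₁ * W₂`
turns the context of `W₂` into `(D * rightNest L W₁) * rightNest (D :: L) ⋯`. -/
theorem eq_of_ldEquiv_mul_rightNest {W W' : FreeMagma X} (hshape : shape W = shape W')
    (D : FreeMagma X) (L : List (FreeMagma X))
    (h : LDEquiv (D * rightNest L W) (D * rightNest L W')) : W = W' := by
  induction W using recOnMul generalizing W' D L with
  | ih1 x =>
    cases W' using recOnMul with
    | ih1 y => exact congrArg of (by simpa [rightmost_rightNest, rightmost] using h.rightmost_eq)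
    | ih2 a b => exact absurd hshape (shape_of_ne_shape_mul x a b)
  | ih2 W₁ W₂ ih₁ ih₂ =>
    cases W' using recOnMul with
    | ih1 y => exact absurd hshape.symm (shape_of_ne_shape_mul y W₁ W₂)
    | ih2 W₁' W₂' =>
      obtain ⟨hshape₁, hshape₂⟩ : shape W₁ = shape W₁' ∧ shape W₂ = shape W₂' := by
        injection hshape with h₁ h₂
        exact ⟨h₁, h₂⟩
      have hsplit := (ldEquiv_rightNest_mul L D W₁ W₂).symm.trans
        (h.trans (ldEquiv_rightNest_mul L D W₁' W₂'))
      obtain rfl := ih₁ hshape₁ D L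
        (hsplit.left_of_shape_eq (by simp [shape_rightNest, hshape₁]))
      rw [ih₂ hshape₂ (D * rightNest L W₁) (D :: L) hsplit]

theorem eq_of_ldEquiv_of_shape_eq {T T' : FreeMagma X} (h : LDEquiv T T')
    (hshape : shape T = shape T') : T = T' :=
  eq_of_ldEquiv_mul_rightNest hshape T [] (.mul_left T h)

end FreeMagma

theorem ldEquiv_iff_eq_of_same_projection {X : Type*} (T T' : FreeMagma X)
    (h : FreeMagma.map (fun _ : X => ()) T = FreeMagma.map (fun _ : X => ()) T') :
    LDEquiv T T' ↔ T = T' :=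
  ⟨fun hT => FreeMagma.eq_of_ldEquiv_of_shape_eq hT h, fun hT => hT ▸ .refl T⟩
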